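/- Let p ∈ ℕ, ϱ ∈ [0,1), s > 0 and ϖ > 0. Let Δ = [δ_{ii′}] ∈ ℝ^{p×p} be symmetric with max_{1≤i≤p} ∑_{i′=1}^p |δ_{ii′}|^ϱ ≤ s (convention 0^0 = 0), and let Δ̂ ∈ ℝ^{p×p} be symmetric with |Δ̂_{·j}|_1 ≤ |Δ_{·j}|_1 for every column j and |Δ̂ − Δ|_∞ ≤ ϖ. Then ‖Δ̂ − Δ‖ ≤ ‖Δ̂ − Δ‖_1 ≤ 12 s ϖ^{1−ϱ}. -/

import Mathlib

/-!
On a column, split the indices according to whether `|Δ i j|` exceeds `ϖ`. Where it does, the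
entrywise error is at most `ϖ`; where it does not, the error is at most `|Δhat i j| + |Δ i j|`,
and the column constraint `|Δhat_{·j}|_1 ≤ |Δ_{·j}|_1` moves the mass of `Δhat` back onto `Δ`.
Together the column error is at most `2 ∑ᵢ min(|Δ i j|, ϖ)`, and weak sparsity bounds each
`min(|x|, ϖ)` by `|x|^ϱ ϖ^(1-ϱ)`. For the symmetric matrix `Δhat - Δ`, row and column sums
coincide, so the Schur test bounds the spectral norm by the column-sum norm.
-/

open Matrix
open scoped Classical

/-- Maximum absolute column-sum norm `‖M‖₁ = max_j ∑_i |M i j|`. -/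
noncomputable def colOneNorm {p : ℕ} (M : Matrix (Fin p) (Fin p) ℝ) : ℝ :=
  ⨆ j : Fin p, ∑ i, |M i j|

/-- Spectral norm (largest singular value) of a square real matrix. -/
noncomputable def specNormR {p : ℕ} (M : Matrix (Fin p) (Fin p) ℝ) : ℝ :=
  ‖Matrix.toEuclideanCLM (𝕜 := ℝ) M‖

section SchurTest

variable {ι : Type*} [Fintype ι]

theorem sq_sum_mul_le_sum_abs_mul_sum_abs_mul_sq (w v : ι → ℝ) :
    (∑ j, w j * v j) ^ 2 ≤ (∑ j, |w j|) * ∑ j, |w j| * v j ^ 2 := by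
  calc (∑ j, w j * v j) ^ 2 ≤ (∑ j, |w j| * |v j|) ^ 2 := by
        rw [← sq_abs]
        gcongr
        simpa only [abs_mul] using Finset.abs_sum_le_sum_abs (fun j => w j * v j) Finset.univ
    _ ≤ (∑ j, |w j|) * ∑ j, |w j| * v j ^ 2 :=
        Finset.sum_sq_le_sum_mul_sum_of_sq_le_mul _ (fun j _ => abs_nonneg _)
          (fun j _ => by positivity) fun j _ => le_of_eq (by rw [mul_pow, sq_abs (v j)]; ring)

theorem norm_toEuclideanCLM_le_sqrt_mul (M : Matrix ι ι ℝ) {R C : ℝ} (hR : 0 ≤ R)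
    (hrow : ∀ i, ∑ j, |M i j| ≤ R) (hcol : ∀ j, ∑ i, |M i j| ≤ C) :
    ‖toEuclideanCLM (𝕜 := ℝ) M‖ ≤ √(R * C) := by
  refine ContinuousLinearMap.opNorm_le_bound _ (Real.sqrt_nonneg _) fun x => ?_
  calc ‖toEuclideanCLM (𝕜 := ℝ) M x‖ = √(‖toEuclideanCLM (𝕜 := ℝ) M x‖ ^ 2) :=
        (Real.sqrt_sq (norm_nonneg _)).symm
    _ ≤ √(R * C * ‖x‖ ^ 2) := Real.sqrt_le_sqrt ?_
    _ = √(R * C) * ‖x‖ := by rw [Real.sqrt_mul' _ (sq_nonneg _), Real.sqrt_sq (norm_nonneg _)]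
  rw [EuclideanSpace.real_norm_sq_eq, EuclideanSpace.real_norm_sq_eq]
  calc ∑ i, (toEuclideanCLM (𝕜 := ℝ) M x i) ^ 2
      ≤ ∑ i, (∑ j, |M i j|) * ∑ j, |M i j| * x j ^ 2 :=
        Finset.sum_le_sum fun i _ => sq_sum_mul_le_sum_abs_mul_sum_abs_mul_sq (M i) x
    _ ≤ ∑ i, R * ∑ j, |M i j| * x j ^ 2 := by
        gcongr with i
        exact hrow i
    _ = R * ∑ j, (∑ i, |M i j|) * x j ^ 2 := by
        simp only [← Finset.mul_sum, Finset.sum_mul]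
        rw [Finset.sum_comm]
    _ ≤ R * ∑ j, C * x j ^ 2 := by
        gcongr with j
        exact hcol j
    _ = R * C * ∑ j, x j ^ 2 := by rw [← Finset.mul_sum, mul_assoc]

end SchurTest

section ColOneNorm

variable {p : ℕ}

theorem sum_abs_le_colOneNorm (M : Matrix (Fin p) (Fin p) ℝ) (j : Fin p) :
    ∑ i, |M i j| ≤ colOneNorm M :=
  le_ciSup (f := fun j => ∑ i, |M i j|) (Set.finite_range _).bddAbove j

theorem colOneNorm_nonneg (M : Matrix (Fin p) (Fin p) ℝ) : 0 ≤ colOneNorm M :=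
  Real.iSup_nonneg fun _ => Finset.sum_nonneg fun _ _ => abs_nonneg _

theorem colOneNorm_le {M : Matrix (Fin p) (Fin p) ℝ} {B : ℝ} (hB : 0 ≤ B)
    (h : ∀ j, ∑ i, |M i j| ≤ B) : colOneNorm M ≤ B :=
  Real.iSup_le h hB

theorem specNormR_le_colOneNorm {M : Matrix (Fin p) (Fin p) ℝ} (hM : M.IsHermitian) :
    specNormR M ≤ colOneNorm M := by
  have hrow (i : Fin p) : ∑ j, |M i j| ≤ colOneNorm M := by
    simpa only [← hM.apply i, star_trivial] using sum_abs_le_colOneNorm M i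
  have h := norm_toEuclideanCLM_le_sqrt_mul M (colOneNorm_nonneg M) hrow
    (sum_abs_le_colOneNorm M)
  rwa [Real.sqrt_mul_self (colOneNorm_nonneg M)] at h

end ColOneNorm

section SparseColumn

variable {ι : Type*} [Fintype ι]

theorem abs_sub_le_two_mul_min_add {a b ϖ : ℝ} (h : |b - a| ≤ ϖ) :
    |b - a| ≤ 2 * min |a| ϖ + (|b| - |a|) := by
  rcases min_cases |a| ϖ with ⟨hmin, -⟩ | ⟨hmin, -⟩ <;> rw [hmin]
  · linarith [abs_sub b a]
  · linarith [abs_sub_abs_le_abs_sub a b, abs_sub_comm a b]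

theorem sum_abs_sub_le_two_mul_sum_min {a b : ι → ℝ} {ϖ : ℝ} (hent : ∀ i, |b i - a i| ≤ ϖ)
    (hl1 : ∑ i, |b i| ≤ ∑ i, |a i|) :
    ∑ i, |b i - a i| ≤ 2 * ∑ i, min |a i| ϖ := by
  calc ∑ i, |b i - a i| ≤ ∑ i, (2 * min |a i| ϖ + (|b i| - |a i|)) :=
        Finset.sum_le_sum fun i _ => abs_sub_le_two_mul_min_add (hent i)
    _ ≤ 2 * ∑ i, min |a i| ϖ := by
        rw [Finset.sum_add_distrib, Finset.sum_sub_distrib, ← Finset.mul_sum]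
        linarith

theorem min_abs_le_rpow_mul_rpow {ϱ ϖ : ℝ} (hϱ0 : 0 ≤ ϱ) (hϱ1 : ϱ ≤ 1) (hϖ : 0 < ϖ) (x : ℝ) :
    min |x| ϖ ≤ (if x = 0 then 0 else |x| ^ ϱ) * ϖ ^ (1 - ϱ) := by
  split_ifs with hx
  · simp [hx, hϖ.le]
  have split_rpow {y : ℝ} (hy : 0 < y) : y = y ^ ϱ * y ^ (1 - ϱ) := by
    rw [← Real.rpow_add hy, add_sub_cancel, Real.rpow_one]
  rcases le_total |x| ϖ with hle | hle
  · calc min |x| ϖ ≤ |x| := min_le_left _ _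
      _ = |x| ^ ϱ * |x| ^ (1 - ϱ) := split_rpow (abs_pos.2 hx)
      _ ≤ |x| ^ ϱ * ϖ ^ (1 - ϱ) := by gcongr
  · calc min |x| ϖ ≤ ϖ := min_le_right _ _
      _ = ϖ ^ ϱ * ϖ ^ (1 - ϱ) := split_rpow hϖ
      _ ≤ |x| ^ ϱ * ϖ ^ (1 - ϱ) := by gcongr

theorem sum_abs_sub_le_of_weak_sparse {a b : ι → ℝ} {ϱ s ϖ : ℝ} (hϱ0 : 0 ≤ ϱ) (hϱ1 : ϱ ≤ 1)
    (hϖ : 0 < ϖ) (hsparse : ∑ i, (if a i = 0 then (0 : ℝ) else |a i| ^ ϱ) ≤ s)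
    (hl1 : ∑ i, |b i| ≤ ∑ i, |a i|) (hent : ∀ i, |b i - a i| ≤ ϖ) :
    ∑ i, |b i - a i| ≤ 2 * s * ϖ ^ (1 - ϱ) := by
  calc ∑ i, |b i - a i| ≤ 2 * ∑ i, min |a i| ϖ := sum_abs_sub_le_two_mul_sum_min hent hl1
    _ ≤ 2 * ∑ i, (if a i = 0 then (0 : ℝ) else |a i| ^ ϱ) * ϖ ^ (1 - ϱ) := by
        gcongr with i
        exact min_abs_le_rpow_mul_rpow hϱ0 hϱ1 hϖ (a i)
    _ ≤ 2 * s * ϖ ^ (1 - ϱ) := by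
        rw [← Finset.sum_mul, mul_assoc]
        gcongr

end SparseColumn

theorem stmt13 (p : ℕ) (ϱ s ϖ : ℝ) (hϱ0 : 0 ≤ ϱ) (hϱ1 : ϱ < 1) (hs : 0 < s) (hϖ : 0 < ϖ)
    (Δ Δhat : Matrix (Fin p) (Fin p) ℝ) (hΔ : Δ.IsHermitian) (hΔhat : Δhat.IsHermitian)
    (hsparse : ∀ i, (∑ i', if Δ i i' = 0 then (0 : ℝ) else |Δ i i'| ^ ϱ) ≤ s)
    (hcol : ∀ j, (∑ i, |Δhat i j|) ≤ ∑ i, |Δ i j|)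
    (hent : ∀ i j, |Δhat i j - Δ i j| ≤ ϖ) :
    specNormR (Δhat - Δ) ≤ colOneNorm (Δhat - Δ) ∧
    colOneNorm (Δhat - Δ) ≤ 12 * s * ϖ ^ (1 - ϱ) := by
  refine ⟨specNormR_le_colOneNorm (hΔhat.sub hΔ), ?_⟩
  have hsQ : 0 ≤ s * ϖ ^ (1 - ϱ) := by positivity
  have hcol_sparse (j : Fin p) :
      ∑ i, (if Δ i j = 0 then (0 : ℝ) else |Δ i j| ^ ϱ) ≤ s := by
    simpa only [← hΔ.apply j, star_trivial] using hsparse j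
  refine colOneNorm_le (by positivity) fun j => ?_
  calc ∑ i, |(Δhat - Δ) i j| = ∑ i, |Δhat i j - Δ i j| := rfl
    _ ≤ 2 * s * ϖ ^ (1 - ϱ) :=
        sum_abs_sub_le_of_weak_sparse hϱ0 hϱ1.le hϖ (hcol_sparse j) (hcol j) (hent · j)
    _ ≤ 12 * s * ϖ ^ (1 - ϱ) := by linarith
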